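/- arXiv:2402.00753 — 5 statements merged into one kernel-verified Lean document; each statement's English description precedes it below -/
import Mathlib

section
/- Let $\Lambda_1,\dots,\Lambda_d\subset\mathbb{P}^n$ be $(k-1)$-planes in special position with respect to $(n-k)$-planes, and let $L\subset\mathbb{P}^n$ be a linear subspace of dimension $\alpha\ge 0$. Suppose $2\le r\le d-1$ is such that $L\cap\Lambda_i=\emptyset$ for $i=1,\dots,r$ and $L\cap\Lambda_i\neq\emptyset$ for $i=r+1,\dots,d$. Then the images $\Gamma_i:=\pi_L(\Lambda_i)$, $i=1,\dots,r$, under the projection $\pi_L\colon\mathbb{P}^n\dashrightarrow\mathbb{P}^{n-\alpha-1}$ are $(k-1)$-planes in special position with respect to $(n-\alpha-1-k)$-planes. -/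
/-- A family of linear subspaces (`(k-1)`-planes of `ℙ(V)`, given as linear subspaces of
`V` of linear dimension `k`) is in special position with respect to planes of linear
dimension `c` (i.e. projective dimension `c - 1`) if for every `j`, any subspace `L` of
linear dimension `c` meeting (projectively) all `Λ i` with `i ≠ j` also meets `Λ j`. -/
def SPlin {V : Type*} [AddCommGroup V] [Module ℂ V] (c : ℕ) {d : ℕ}
    (Λ : Fin d → Submodule ℂ V) : Prop :=
  ∀ j : Fin d, ∀ L : Submodule ℂ V, Module.finrank ℂ L = c →
    (∀ i : Fin d, i ≠ j → L ⊓ Λ i ≠ ⊥) → L ⊓ Λ j ≠ ⊥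

/-- finrank of the image of a submodule under the quotient map, when disjoint from the
kernel. -/
lemma aux_map_finrank {V : Type*} [AddCommGroup V] [Module ℂ V] [FiniteDimensional ℂ V]
    (L p : Submodule ℂ V) (h : L ⊓ p = ⊥) :
    Module.finrank ℂ (p.map L.mkQ) = Module.finrank ℂ p := by
  set f : p →ₗ[ℂ] V ⧸ L := L.mkQ.comp p.subtype with hf
  have hker : LinearMap.ker f = ⊥ := by
    rw [LinearMap.ker_eq_bot']
    intro m hm
    have hmL : (m : V) ∈ L := by
      simpa [f, Submodule.Quotient.mk_eq_zero] using hm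
    have : (m : V) ∈ L ⊓ p := ⟨hmL, m.2⟩
    rw [h] at this
    exact Subtype.ext this
  have hrange : LinearMap.range f = p.map L.mkQ := by
    rw [hf, LinearMap.range_comp, Submodule.range_subtype]
  have := LinearMap.finrank_range_add_finrank_ker f
  rw [hker, hrange] at this
  simpa using this

/-- finrank of the preimage under the quotient map. -/
lemma aux_comap_finrank {V : Type*} [AddCommGroup V] [Module ℂ V] [FiniteDimensional ℂ V]
    (L : Submodule ℂ V) (L' : Submodule ℂ (V ⧸ L)) :
    Module.finrank ℂ (L'.comap L.mkQ) = Module.finrank ℂ L' + Module.finrank ℂ L := by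
  set M := L'.comap L.mkQ with hM
  have hLM : L ≤ M := by
    intro x hx
    simp [hM, Submodule.mem_comap, (Submodule.Quotient.mk_eq_zero L).mpr hx]
  set f : M →ₗ[ℂ] V ⧸ L := L.mkQ.comp M.subtype with hf
  have hrange : LinearMap.range f = L' := by
    rw [hf, LinearMap.range_comp, Submodule.range_subtype, hM,
      Submodule.map_comap_eq, Submodule.range_mkQ, top_inf_eq]
  have hker : LinearMap.ker f = L.comap M.subtype := by
    rw [hf, LinearMap.ker_comp, Submodule.ker_mkQ]
  have hkerrank : Module.finrank ℂ (LinearMap.ker f) = Module.finrank ℂ L := by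
    rw [hker]
    exact LinearEquiv.finrank_eq (Submodule.comapSubtypeEquivOfLe hLM)
  have := LinearMap.finrank_range_add_finrank_ker f
  rw [hrange, hkerrank] at this
  simpa using this.symm

/-- Projection from a linear subspace `L` preserves the special position property for the
planes disjoint from `L`: if `Λ₁, …, Λ_d` are `(k-1)`-planes of `ℙⁿ` that are `SP(n-k)`,
`L` is an `α`-plane with `L ∩ Λ_i = ∅` exactly for `i = 1, …, r` (where `2 ≤ r ≤ d - 1`),
then the images `π_L(Λ_i)`, `i = 1, …, r`, are `(k-1)`-planes of `ℙ^{n-α-1}` in special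
position with respect to `(n-α-1-k)`-planes. -/
theorem stmt_1 (n k α d r : ℕ) (hk1 : 1 ≤ k) (hkn : k ≤ n) (hd : 2 ≤ d)
    (Λ : Fin d → Submodule ℂ (Fin (n + 1) → ℂ))
    (hΛ : ∀ i, Module.finrank ℂ (Λ i) = k)
    (hSP : SPlin (n - k + 1) Λ)
    (L : Submodule ℂ (Fin (n + 1) → ℂ)) (hL : Module.finrank ℂ L = α + 1)
    (hr2 : 2 ≤ r) (hrd : r ≤ d - 1)
    (hdisj : ∀ i : Fin d, (i : ℕ) < r → L ⊓ Λ i = ⊥)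
    (hmeet : ∀ i : Fin d, r ≤ (i : ℕ) → L ⊓ Λ i ≠ ⊥) :
    (∀ i : Fin r,
        Module.finrank ℂ ((Λ ⟨i.1, by have := i.2; omega⟩).map L.mkQ) = k) ∧
      SPlin (n - α - 1 - k + 1)
        (fun i : Fin r => (Λ ⟨i.1, by have := i.2; omega⟩).map L.mkQ) := by
  have hrd' : r < d := by omega
  -- ranks of images
  have hmapr : ∀ i : Fin r,
      Module.finrank ℂ ((Λ ⟨i.1, by have := i.2; omega⟩).map L.mkQ) = k := by
    intro i
    rw [aux_map_finrank L _ (hdisj ⟨i.1, by have := i.2; omega⟩ i.2), hΛ]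
  refine ⟨hmapr, ?_⟩
  -- dimension of quotient
  have hV : Module.finrank ℂ (Fin (n + 1) → ℂ) = n + 1 := Module.finrank_fin_fun ℂ
  have hαn : α + 1 ≤ n + 1 := by
    have h := Submodule.finrank_le L
    rw [hL, hV] at h
    exact h
  have hQ : Module.finrank ℂ ((Fin (n + 1) → ℂ) ⧸ L) = n - α := by
    have := Submodule.finrank_quotient_add_finrank L
    rw [hL, hV] at this
    omega
  -- k ≤ n - α
  have hkle : k ≤ n - α := by
    have := hmapr ⟨0, by omega⟩
    rw [← this, ← hQ]
    exact Submodule.finrank_le _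
  intro j L' hL' hmeets
  set j' : Fin d := ⟨j.1, by have := j.2; omega⟩ with hj'
  by_cases hcase : k = n - α
  · -- the image plane is everything
    have htop : (Λ j').map L.mkQ = ⊤ := by
      apply Submodule.eq_top_of_finrank_eq
      rw [hQ, ← hcase]
      exact hmapr j
    simp only [htop]
    rw [show (Λ ⟨j.1, by have := j.2; omega⟩).map L.mkQ = ⊤ from htop, inf_top_eq]
    intro hbot
    rw [hbot] at hL'
    simp at hL'
  · have hklt : k < n - α := lt_of_le_of_ne hkle hcase
    set M := L'.comap L.mkQ with hMdef
    have hLM : L ≤ M := by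
      intro x hx
      simp [hMdef, Submodule.mem_comap, (Submodule.Quotient.mk_eq_zero L).mpr hx]
    have hMrank : Module.finrank ℂ M = n - k + 1 := by
      rw [hMdef, aux_comap_finrank, hL', hL]
      omega
    have hstep : M ⊓ Λ j' ≠ ⊥ := by
      apply hSP j' M hMrank
      intro i hij
      by_cases hir : (i : ℕ) < r
      · set i'' : Fin r := ⟨i.1, hir⟩ with hi''
        have hij'' : i'' ≠ j := by
          intro h
          apply hij
          apply Fin.ext
          have : (i'' : ℕ) = (j : ℕ) := by rw [h]
          simpa [hi''] using this
        have := hmeets i'' hij''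
        simp only at this
        rw [Submodule.ne_bot_iff] at this ⊢
        obtain ⟨x, ⟨hxL', hxΓ⟩, hx0⟩ := this
        obtain ⟨v, hvΛ, hvx⟩ := hxΓ
        have hvΛi : v ∈ Λ i := hvΛ
        refine ⟨v, ⟨?_, hvΛi⟩, ?_⟩
        · simp [hMdef, Submodule.mem_comap, hvx, hxL']
        · intro h; rw [h] at hvx; simp at hvx; exact hx0 hvx.symm
      · have := hmeet i (by omega)
        rw [Submodule.ne_bot_iff] at this ⊢
        obtain ⟨x, ⟨hxL, hxΛ⟩, hx0⟩ := this
        exact ⟨x, ⟨hLM hxL, hxΛ⟩, hx0⟩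
    rw [Submodule.ne_bot_iff] at hstep ⊢
    obtain ⟨x, ⟨hxM, hxΛ⟩, hx0⟩ := hstep
    refine ⟨L.mkQ x, ⟨hxM, ⟨x, ?_, rfl⟩⟩, ?_⟩
    · exact hxΛ
    · intro h
      have hxL : x ∈ L := (Submodule.Quotient.mk_eq_zero L).mp (by simpa using h)
      have : x ∈ L ⊓ Λ j' := ⟨hxL, hxΛ⟩
      rw [hdisj j' (by simpa [hj'] using j.2)] at this
      exact hx0 this
end

section
/- Let $C$ be a smooth non-hyperelliptic complex projective curve of genus $g$, canonically embedded in $\mathbb{P}^{g-1}$. Let $P_1,\dots,P_d$ be effective divisors of degree $k$ on $C$ with pairwise disjoint reduced supports, let $\Lambda_i\subset\mathbb{P}^{g-1}$ be the span of the support of $P_i$, and assume $\Lambda_1,\dots,\Lambda_d$ are in special position with respect to $(g-1-k)$-planes. If $A$ is a set of points of $C$ (chosen among the supports of the $P_i$) and $j\in\{1,\dots,d\}$ satisfy $A\cap\mathrm{Supp}(P_j)=\emptyset$ while $A\cap\mathrm{Supp}(P_i)\neq\emptyset$ for all $i\neq j$, then $|A|\ge\mathrm{gon}(C)-k$. -/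
/-- An abstract smooth complex projective curve, recorded through its set of points, its
genus, and the dimension `h0 D = h^0(C, O_C(D))` of the space of global sections of the
line bundle attached to each divisor `D` on `C` (divisors being finitely supported
`ℤ`-valued functions on the points of `C`). -/
structure AbstractCurve where
  Point : Type
  genus : ℕ
  h0 : (Point →₀ ℤ) → ℕ

namespace AbstractCurve

variable (C : AbstractCurve)

/-- The degree of a divisor. -/
def deg (D : C.Point →₀ ℤ) : ℤ := D.sum fun _ n => n

/-- A divisor is effective if all its coefficients are nonnegative. -/
def Effective (D : C.Point →₀ ℤ) : Prop := ∀ p, 0 ≤ D p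

/-- The gonality of `C`: the least degree of a pencil, i.e. the least degree of an
effective divisor `D` with `h^0(D) ≥ 2` (equivalently, the least degree of a nonconstant
morphism `C → ℙ¹`). -/
noncomputable def gonality : ℕ :=
  sInf {d : ℕ | ∃ D : C.Point →₀ ℤ, C.Effective D ∧ C.deg D = (d : ℤ) ∧ 2 ≤ C.h0 D}

/-- `C` is hyperelliptic if it carries a `g¹₂`. -/
def Hyperelliptic : Prop :=
  ∃ D : C.Point →₀ ℤ, C.Effective D ∧ C.deg D = 2 ∧ 2 ≤ C.h0 D

/-- `C` is trigonal if it carries a `g¹₃`. -/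
def Trigonal : Prop :=
  ∃ D : C.Point →₀ ℤ, C.Effective D ∧ C.deg D = 3 ∧ 2 ≤ C.h0 D

/-- A (complete) linear series `|D|` is very ample iff `dim |D - p - q| = dim |D| - 2`
for all points `p, q` of `C`. -/
def VeryAmple (D : C.Point →₀ ℤ) : Prop :=
  ∀ p q : C.Point,
    C.h0 (D - Finsupp.single p 1 - Finsupp.single q 1) = C.h0 D - 2

/-- `C` is a smooth plane quintic iff it carries a very ample `g²₅`. -/
def PlaneQuintic : Prop :=
  ∃ D : C.Point →₀ ℤ, C.Effective D ∧ C.deg D = 5 ∧ C.h0 D = 3 ∧ C.VeryAmple D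

end AbstractCurve

/-- A non-hyperelliptic curve together with its canonical embedding `C ↪ ℙ^{g-1}`,
recorded by a choice of homogeneous coordinate vectors `can p ∈ ℂ^g` for its points,
injective (the canonical map is an embedding) and satisfying the geometric
Riemann–Roch theorem for reduced effective divisors: for a finite set `S` of points,
`dim |S| = #S - 1 - dim Span(S)`, i.e.
`h⁰(S) = #S - (finrank of the linear span of the coordinate vectors) + 1`. -/
structure CanonicalCurve extends AbstractCurve where
  can : Point → (Fin genus → ℂ)
  can_ne : ∀ p, can p ≠ 0
  can_injective : Function.Injective can
  geomRR : ∀ S : Finset Point,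
    (h0 (∑ p ∈ S, Finsupp.single p (1 : ℤ)) : ℤ)
      = (S.card : ℤ)
        - (Module.finrank ℂ (Submodule.span ℂ (can '' (S : Set Point))) : ℤ) + 1

/-- Let `C` be a smooth non-hyperelliptic curve canonically embedded in `ℙ^{g-1}` and let
`P 1, …, P d` be effective divisors of degree `k` with pairwise disjoint reduced supports
(recorded as pairwise disjoint `k`-element finite sets of points), whose spans
`Λ i = Span (can '' P i)` are in special position with respect to `(g-1-k)`-planes
(linear subspaces of dimension `g - k`). If `A` is a set of points chosen among the
supports of the `P i`, and `j` is an index with `A ∩ Supp (P j) = ∅` while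
`A ∩ Supp (P i) ≠ ∅` for all `i ≠ j`, then `#A ≥ gon C - k`. -/
theorem stmt_4 (C : CanonicalCurve) (hhyp : ¬ C.toAbstractCurve.Hyperelliptic)
    (d k : ℕ) (hd : 1 ≤ d) (hk : 1 ≤ k)
    (P : Fin d → Finset C.Point) (hPcard : ∀ i, (P i).card = k)
    (hPdisj : ∀ i j, i ≠ j → Disjoint (P i) (P j))
    (hSP : ∀ j : Fin d, ∀ L : Submodule ℂ (Fin C.genus → ℂ),
        Module.finrank ℂ L = C.genus - k →
        (∀ i, i ≠ j → L ⊓ Submodule.span ℂ (C.can '' ((P i : Set C.Point))) ≠ ⊥) →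
        L ⊓ Submodule.span ℂ (C.can '' ((P j : Set C.Point))) ≠ ⊥)
    (A : Finset C.Point) (hAsub : ∀ x ∈ A, ∃ i, x ∈ P i)
    (j : Fin d) (hAj : Disjoint A (P j))
    (hAi : ∀ i, i ≠ j → ¬ Disjoint A (P i)) :
    (C.toAbstractCurve.gonality : ℤ) - (k : ℤ) ≤ (A.card : ℤ) := by
  classical
  set S : Finset C.Point := A ∪ P j with hS
  have hScard : S.card = A.card + k := by
    rw [hS, Finset.card_union_of_disjoint hAj, hPcard]
  set ΛA : Submodule ℂ (Fin C.genus → ℂ) := Submodule.span ℂ (C.can '' (A : Set C.Point)) with hΛA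
  set Λj : Submodule ℂ (Fin C.genus → ℂ) :=
    Submodule.span ℂ (C.can '' ((P j : Set C.Point))) with hΛj
  have hW : Submodule.span ℂ (C.can '' (S : Set C.Point)) = ΛA ⊔ Λj := by
    rw [hS, Finset.coe_union, Set.image_union, Submodule.span_union]
  -- the main claim: the span of `can '' S` has dimension at most `|S| - 1`
  have key : Module.finrank ℂ (ΛA ⊔ Λj : Submodule ℂ (Fin C.genus → ℂ)) + 1 ≤ A.card + k := by
    by_contra hbig
    push_neg at hbig
    -- so the dimension is exactly `|A| + k`
    have hle : Module.finrank ℂ (ΛA ⊔ Λj : Submodule ℂ (Fin C.genus → ℂ)) ≤ S.card := by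
      rw [← hW]
      have h1 : C.can '' (S : Set C.Point) = ((S.image C.can : Finset (Fin C.genus → ℂ)) :
          Set (Fin C.genus → ℂ)) := by rw [Finset.coe_image]
      rw [h1]
      exact le_trans (finrank_span_finset_le_card _) (Finset.card_image_le)
    have hWrank : Module.finrank ℂ (ΛA ⊔ Λj : Submodule ℂ (Fin C.genus → ℂ)) = A.card + k := by
      omega
    have hA_le : Module.finrank ℂ ΛA ≤ A.card := by
      have h1 : C.can '' (A : Set C.Point) = ((A.image C.can : Finset (Fin C.genus → ℂ)) :
          Set (Fin C.genus → ℂ)) := by rw [Finset.coe_image]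
      rw [hΛA, h1]
      exact le_trans (finrank_span_finset_le_card _) (Finset.card_image_le)
    have hJ_le : Module.finrank ℂ Λj ≤ k := by
      have h1 : C.can '' ((P j : Set C.Point)) = (((P j).image C.can : Finset (Fin C.genus → ℂ)) :
          Set (Fin C.genus → ℂ)) := by rw [Finset.coe_image]
      rw [hΛj, h1]
      exact le_trans (finrank_span_finset_le_card _)
        (le_trans Finset.card_image_le (le_of_eq (hPcard j)))
    have hsupinf := Submodule.finrank_sup_add_finrank_inf_eq ΛA Λj
    have hArank : Module.finrank ℂ ΛA = A.card := by omega
    have hinf0 : Module.finrank ℂ (ΛA ⊓ Λj : Submodule ℂ (Fin C.genus → ℂ)) = 0 := by omega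
    have hinfbot : (ΛA ⊓ Λj : Submodule ℂ (Fin C.genus → ℂ)) = ⊥ :=
      Submodule.finrank_eq_zero.mp hinf0
    have hgle : A.card + k ≤ C.genus := by
      rw [← hWrank]
      have := Submodule.finrank_le (ΛA ⊔ Λj : Submodule ℂ (Fin C.genus → ℂ))
      simpa [Module.finrank_fin_fun] using this
    -- take a complement `N` of `ΛA ⊔ Λj` and set `L = ΛA ⊔ N`
    obtain ⟨N, hN⟩ := Submodule.exists_isCompl (ΛA ⊔ Λj : Submodule ℂ (Fin C.genus → ℂ))
    have hNrank : Module.finrank ℂ (ΛA ⊔ Λj : Submodule ℂ (Fin C.genus → ℂ))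
        + Module.finrank ℂ N = C.genus := by
      rw [Submodule.finrank_add_eq_of_isCompl hN, Module.finrank_fin_fun]
    set L : Submodule ℂ (Fin C.genus → ℂ) := ΛA ⊔ N with hL
    have hAN : (ΛA ⊓ N : Submodule ℂ (Fin C.genus → ℂ)) = ⊥ :=
      disjoint_iff.mp (hN.disjoint.mono_left le_sup_left)
    have hLrank : Module.finrank ℂ L = C.genus - k := by
      have := Submodule.finrank_sup_add_finrank_inf_eq ΛA N
      rw [hAN] at this
      simp only [finrank_bot] at this
      rw [hL]
      omega
    -- `L ⊓ Λj = ⊥`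
    have hLj : (L ⊓ Λj : Submodule ℂ (Fin C.genus → ℂ)) = ⊥ := by
      rw [Submodule.eq_bot_iff]
      rintro x ⟨hxL, hxJ⟩
      obtain ⟨a, ha, n, hn, hx⟩ := Submodule.mem_sup.mp hxL
      have hnW : n ∈ (ΛA ⊔ Λj : Submodule ℂ (Fin C.genus → ℂ)) := by
        have : n = x - a := by rw [← hx]; ring
        rw [this]
        exact Submodule.sub_mem _ (Submodule.mem_sup_right hxJ) (Submodule.mem_sup_left ha)
      have hn0 : n = 0 := by
        have := hN.disjoint.le_bot ⟨hnW, hn⟩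
        simpa using this
      have hxA : x ∈ ΛA := by rw [← hx, hn0, add_zero]; exact ha
      have := (Submodule.eq_bot_iff _).mp hinfbot x ⟨hxA, hxJ⟩
      exact this
    -- but `L` meets every `Λ i`, `i ≠ j`, so special position forces `L ⊓ Λj ≠ ⊥`
    refine hSP j L hLrank (fun i hij => ?_) hLj
    obtain ⟨x, hxA, hxP⟩ := Finset.not_disjoint_iff.mp (hAi i hij)
    rw [Submodule.ne_bot_iff]
    refine ⟨C.can x, ⟨?_, ?_⟩, C.can_ne x⟩
    · exact Submodule.mem_sup_left (Submodule.subset_span ⟨x, hxA, rfl⟩)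
    · exact Submodule.subset_span ⟨x, hxP, rfl⟩
  -- now apply geometric Riemann–Roch to `S` and conclude
  have hRR := C.geomRR S
  rw [hW] at hRR
  have hh0 : 2 ≤ C.h0 (∑ p ∈ S, Finsupp.single p (1 : ℤ)) := by omega
  have hgon : C.toAbstractCurve.gonality ≤ S.card := by
    apply Nat.sInf_le
    refine ⟨∑ p ∈ S, Finsupp.single p (1 : ℤ), ?_, ?_, hh0⟩
    · intro p
      rw [Finset.sum_apply']
      refine Finset.sum_nonneg fun q _ => ?_
      rw [Finsupp.single_apply]
      split <;> norm_num
    · show (∑ p ∈ S, Finsupp.single p (1 : ℤ)).sum (fun _ n => n) = (S.card : ℤ)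
      rw [← Finsupp.sum_finsetSum_index (fun _ => rfl) (fun _ _ _ => rfl)]
      simp [Finsupp.sum_single_index]
  have : (C.toAbstractCurve.gonality : ℤ) ≤ (S.card : ℤ) := by exact_mod_cast hgon
  omega
end

section
/- Let $P_1,\dots,P_6$ be six distinct 3-element subsets of a set $Q=\{q_1,\dots,q_9\}$ of 9 points such that every $q_j$ lies in exactly two of the sets $P_i$, and suppose that for every $i$ there exists $j\neq i$ with $|P_i\cap P_j|=2$. Then, up to relabeling, the configuration is $P_1=\{q_1,q_2,q_3\}$, $P_2=\{q_2,q_3,q_4\}$, $P_3=\{q_4,q_5,q_6\}$, $P_4=\{q_5,q_6,q_7\}$, $P_5=\{q_7,q_8,q_9\}$, $P_6=\{q_8,q_9,q_1\}$. -/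
/-- The reference configuration: the "6-cycle" pattern
`{q₁,q₂,q₃}, {q₂,q₃,q₄}, {q₄,q₅,q₆}, {q₅,q₆,q₇}, {q₇,q₈,q₉}, {q₈,q₉,q₁}`
(with indices shifted to start at `0`). -/
def cyclePattern : Fin 6 → Finset (Fin 9) :=
  ![{0, 1, 2}, {1, 2, 3}, {3, 4, 5}, {4, 5, 6}, {6, 7, 8}, {7, 8, 0}]

/-- Let `P₁, …, P₆` be six distinct 3-element subsets of a 9-point set such that every
point lies in exactly two of the sets and every set shares exactly two points with some
other set. Then, up to relabeling the sets and the points, the configuration is the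
6-cycle pattern. -/
theorem stmt_13 (P : Fin 6 → Finset (Fin 9))
    (hdist : Function.Injective P)
    (hcard : ∀ i, (P i).card = 3)
    (hpt : ∀ q : Fin 9, (Finset.univ.filter (fun i => q ∈ P i)).card = 2)
    (hpair : ∀ i, ∃ j, j ≠ i ∧ (P i ∩ P j).card = 2) :
    ∃ (σ : Equiv.Perm (Fin 6)) (τ : Equiv.Perm (Fin 9)),
      ∀ i, P (σ i) = (cyclePattern i).image τ := by
  classical
  -- the total intersection count of each set with the others is 3
  have hsum : ∀ i, ∑ j ∈ Finset.univ.erase i, (P i ∩ P j).card = 3 := by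
    intro i
    have hrw : ∀ j, (P i ∩ P j).card = ∑ q ∈ P i, if q ∈ P j then 1 else 0 := by
      intro j
      rw [← Finset.filter_mem_eq_inter, Finset.card_filter]
    calc ∑ j ∈ Finset.univ.erase i, (P i ∩ P j).card
        = ∑ j ∈ Finset.univ.erase i, ∑ q ∈ P i, if q ∈ P j then 1 else 0 := by
          exact Finset.sum_congr rfl fun j _ => hrw j
      _ = ∑ q ∈ P i, ∑ j ∈ Finset.univ.erase i, if q ∈ P j then 1 else 0 :=
          Finset.sum_comm
      _ = ∑ q ∈ P i, ((Finset.univ.erase i).filter fun j => q ∈ P j).card := by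
          exact Finset.sum_congr rfl fun q _ => (Finset.card_filter _ _).symm
      _ = ∑ q ∈ P i, 1 := by
          refine Finset.sum_congr rfl fun q hq => ?_
          rw [Finset.filter_erase, Finset.card_erase_of_mem (by
            simp only [Finset.mem_filter, Finset.mem_univ, true_and]; exact hq), hpt q]
      _ = 3 := by rw [Finset.sum_const, hcard i]; rfl
  have hle2 : ∀ i j, j ≠ i → (P i ∩ P j).card ≤ 2 := by
    intro i j hne
    have h1 : (P i ∩ P j).card ≤ 3 := by
      have := Finset.card_le_card (Finset.inter_subset_left : P i ∩ P j ⊆ P i)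
      rwa [hcard i] at this
    rcases Nat.lt_or_ge (P i ∩ P j).card 3 with h | h
    · omega
    · exfalso
      have h3 : (P i ∩ P j).card = 3 := le_antisymm h1 h
      have e1 : P i ∩ P j = P i :=
        Finset.eq_of_subset_of_card_le Finset.inter_subset_left (by rw [hcard i, h3])
      have e2 : P i ∩ P j = P j :=
        Finset.eq_of_subset_of_card_le Finset.inter_subset_right (by rw [hcard j, h3])
      exact hne (hdist (e2.symm.trans e1))
  obtain ⟨d, hd⟩ := Classical.axiomOfChoice hpair
  have hdne : ∀ i, d i ≠ i := fun i => (hd i).1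
  have hd2 : ∀ i, (P i ∩ P (d i)).card = 2 := fun i => (hd i).2
  -- uniqueness of the double partner
  have huniq2 : ∀ i j, j ≠ i → (P i ∩ P j).card = 2 → j = d i := by
    intro i j hji h2
    by_contra hne
    have hsub : ({j, d i} : Finset (Fin 6)) ⊆ Finset.univ.erase i := by
      intro x hx
      simp only [Finset.mem_insert, Finset.mem_singleton] at hx
      simp only [Finset.mem_erase, Finset.mem_univ, and_true]
      rcases hx with rfl | rfl
      · exact hji
      · exact hdne i
    have hmono := Finset.sum_le_sum_of_subset (f := fun j => (P i ∩ P j).card) hsub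
    rw [Finset.sum_pair hne] at hmono
    rw [hsum i, h2, hd2 i] at hmono
    omega
  have hresid : ∀ i, ∑ j ∈ (Finset.univ.erase i).erase (d i), (P i ∩ P j).card = 1 := by
    intro i
    have hmem : d i ∈ Finset.univ.erase i := by
      simp only [Finset.mem_erase, Finset.mem_univ, and_true]; exact hdne i
    have := Finset.add_sum_erase (Finset.univ.erase i)
      (fun j => (P i ∩ P j).card) hmem
    rw [hsum i, hd2 i] at this
    omega
  have hs_ex : ∀ i, ∃ j, j ≠ d i ∧ j ≠ i ∧ (P i ∩ P j).card = 1 := by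
    intro i
    have h1 := hresid i
    obtain ⟨j, hjmem, hjne⟩ := Finset.exists_ne_zero_of_sum_ne_zero (by rw [h1]; omega :
      ∑ j ∈ (Finset.univ.erase i).erase (d i), (P i ∩ P j).card ≠ 0)
    have hle := Finset.single_le_sum (f := fun j => (P i ∩ P j).card)
      (fun _ _ => Nat.zero_le _) hjmem
    rw [h1] at hle
    simp only [Finset.mem_erase, Finset.mem_univ, and_true] at hjmem
    exact ⟨j, hjmem.1, hjmem.2, by omega⟩
  obtain ⟨s, hs⟩ := Classical.axiomOfChoice hs_ex
  have hsd : ∀ i, s i ≠ d i := fun i => (hs i).1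
  have hsne : ∀ i, s i ≠ i := fun i => (hs i).2.1
  have hs1 : ∀ i, (P i ∩ P (s i)).card = 1 := fun i => (hs i).2.2
  have huniq1 : ∀ i j, j ≠ i → (P i ∩ P j).card = 1 → j = s i := by
    intro i j hji h1
    by_contra hne
    have hjd : j ≠ d i := by
      intro h; rw [h, hd2 i] at h1; omega
    have hsub : ({j, s i} : Finset (Fin 6)) ⊆ (Finset.univ.erase i).erase (d i) := by
      intro x hx
      simp only [Finset.mem_insert, Finset.mem_singleton] at hx
      simp only [Finset.mem_erase, Finset.mem_univ, and_true]
      rcases hx with rfl | rfl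
      · exact ⟨hjd, hji⟩
      · exact ⟨hsd i, hsne i⟩
    have hmono := Finset.sum_le_sum_of_subset (f := fun j => (P i ∩ P j).card) hsub
    rw [Finset.sum_pair hne] at hmono
    rw [hresid i, h1, hs1 i] at hmono
    omega
  have hzero : ∀ i j, j ≠ i → j ≠ d i → j ≠ s i → (P i ∩ P j).card = 0 := by
    intro i j h1 h2 h3
    by_contra h0
    have hle := hle2 i j h1
    have : (P i ∩ P j).card = 1 ∨ (P i ∩ P j).card = 2 := by omega
    rcases this with h | h
    · exact h3 (huniq1 i j h1 h)
    · exact h2 (huniq2 i j h1 h)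
  have hdinv : ∀ i, d (d i) = i := by
    intro i
    exact (huniq2 (d i) i (Ne.symm (hdne i)) (by rw [Finset.inter_comm]; exact hd2 i)).symm
  have hsinv : ∀ i, s (s i) = i := by
    intro i
    exact (huniq1 (s i) i (Ne.symm (hsne i)) (by rw [Finset.inter_comm]; exact hs1 i)).symm
  have hds : ∀ i, d i ≠ s i := fun i => Ne.symm (hsd i)
  -- each set is covered by the two partner intersections
  have hcover : ∀ i q, q ∈ P i → q ∈ P (d i) ∨ q ∈ P (s i) := by
    intro i q hq
    have hi : i ∈ Finset.univ.filter fun k => q ∈ P k := by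
      simp only [Finset.mem_filter, Finset.mem_univ, true_and]; exact hq
    have hne : ((Finset.univ.filter fun k => q ∈ P k).erase i).Nonempty := by
      rw [← Finset.card_pos, Finset.card_erase_of_mem hi, hpt q]
      omega
    obtain ⟨j, hj⟩ := hne
    rw [Finset.mem_erase, Finset.mem_filter] at hj
    have hqj : q ∈ P j := hj.2.2
    have hcne : (P i ∩ P j).card ≠ 0 := by
      have : q ∈ P i ∩ P j := Finset.mem_inter.mpr ⟨hq, hqj⟩
      exact Finset.card_ne_zero_of_mem this
    by_cases hjd : j = d i
    · left; rw [← hjd]; exact hqj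
    by_cases hjs : j = s i
    · right; rw [← hjs]; exact hqj
    exact absurd (hzero i j hj.1 hjd hjs) hcne
  have hunion : ∀ i, P i = (P i ∩ P (d i)) ∪ (P i ∩ P (s i)) := by
    intro i
    ext q
    simp only [Finset.mem_union, Finset.mem_inter]
    constructor
    · intro hq
      rcases hcover i q hq with h | h
      · exact Or.inl ⟨hq, h⟩
      · exact Or.inr ⟨hq, h⟩
    · rintro (⟨h, _⟩ | ⟨h, _⟩) <;> exact h
  -- build the 6-cycle a0 - a1 - a2 - a3 - a4 - a5
  set a0 : Fin 6 := 0 with ha0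
  set a1 : Fin 6 := d a0 with ha1
  set a2 : Fin 6 := s a1 with ha2
  set a3 : Fin 6 := d a2 with ha3
  set a4 : Fin 6 := s a3 with ha4
  set a5 : Fin 6 := d a4 with ha5
  have eda1 : d a1 = a0 := by rw [ha1, hdinv]
  have esa2 : s a2 = a1 := by rw [ha2, hsinv]
  have eda3 : d a3 = a2 := by rw [ha3, hdinv]
  have esa4 : s a4 = a3 := by rw [ha4, hsinv]
  have eda5 : d a5 = a4 := by rw [ha5, hdinv]
  have n10 : a1 ≠ a0 := by rw [ha1]; exact hdne a0
  have n21 : a2 ≠ a1 := by rw [ha2]; exact hsne a1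
  have n20 : a2 ≠ a0 := by rw [ha2, ← eda1]; exact Ne.symm (hds a1)
  have n32 : a3 ≠ a2 := by rw [ha3]; exact hdne a2
  have n31 : a3 ≠ a1 := by
    intro h
    exact n20 ((eda3.symm.trans (by rw [h])).trans eda1 : a2 = a0)
  have n30 : a3 ≠ a0 := by
    intro h
    exact n21 ((eda3.symm.trans (by rw [h])).trans ha1.symm : a2 = a1)
  have n43 : a4 ≠ a3 := by rw [ha4]; exact hsne a3
  have n42 : a4 ≠ a2 := by
    intro h
    exact n31 ((esa4.symm.trans (by rw [h])).trans esa2 : a3 = a1)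
  have n41 : a4 ≠ a1 := by
    intro h
    exact n32 ((esa4.symm.trans (by rw [h])).trans ha2.symm : a3 = a2)
  have n40 : a4 ≠ a0 := by
    intro h
    -- then {a0, a1, a2, a3} would be closed under both d and s
    have esa0 : s a0 = a3 := by rw [← h, ha4, hsinv]
    have esa3 : s a3 = a0 := by rw [← ha4, h]
    have hScard : ({a0, a1, a2, a3} : Finset (Fin 6)).card = 4 := by
      rw [Finset.card_insert_of_notMem (by
        simp only [Finset.mem_insert, Finset.mem_singleton]
        push_neg
        exact ⟨Ne.symm n10, Ne.symm n20, Ne.symm n30⟩),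
        Finset.card_insert_of_notMem (by
        simp only [Finset.mem_insert, Finset.mem_singleton]
        push_neg
        exact ⟨Ne.symm n21, Ne.symm n31⟩),
        Finset.card_insert_of_notMem (by
        simp only [Finset.mem_singleton]
        exact Ne.symm n32), Finset.card_singleton]
    have hTcard : (({a0, a1, a2, a3} : Finset (Fin 6))ᶜ).card = 2 := by
      rw [Finset.card_compl, hScard]
      rfl
    obtain ⟨v, hv⟩ : (({a0, a1, a2, a3} : Finset (Fin 6))ᶜ).Nonempty := by
      rw [← Finset.card_pos, hTcard]; omega
    have hvS : v ∉ ({a0, a1, a2, a3} : Finset (Fin 6)) := Finset.mem_compl.mp hv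
    have hdS : ∀ x ∈ ({a0, a1, a2, a3} : Finset (Fin 6)),
        d x ∈ ({a0, a1, a2, a3} : Finset (Fin 6)) := by
      intro x hx
      simp only [Finset.mem_insert, Finset.mem_singleton] at hx ⊢
      rcases hx with rfl | rfl | rfl | rfl
      · right; left; exact ha1.symm
      · left; exact eda1
      · right; right; right; exact ha3.symm
      · right; right; left; exact eda3
    have hsS : ∀ x ∈ ({a0, a1, a2, a3} : Finset (Fin 6)),
        s x ∈ ({a0, a1, a2, a3} : Finset (Fin 6)) := by
      intro x hx
      simp only [Finset.mem_insert, Finset.mem_singleton] at hx ⊢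
      rcases hx with rfl | rfl | rfl | rfl
      · right; right; right; exact esa0
      · right; right; left; exact ha2.symm
      · right; left; exact esa2
      · left; exact esa3
    have hdvT : d v ∈ (({a0, a1, a2, a3} : Finset (Fin 6))ᶜ) := by
      rw [Finset.mem_compl]
      intro hmem
      exact hvS (by rw [← hdinv v]; exact hdS _ hmem)
    have hsvT : s v ∈ (({a0, a1, a2, a3} : Finset (Fin 6))ᶜ) := by
      rw [Finset.mem_compl]
      intro hmem
      exact hvS (by rw [← hsinv v]; exact hsS _ hmem)
    have hsub : ({v, d v} : Finset (Fin 6)) ⊆ (({a0, a1, a2, a3} : Finset (Fin 6))ᶜ) := by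
      intro x hx
      simp only [Finset.mem_insert, Finset.mem_singleton] at hx
      rcases hx with rfl | rfl
      · exact hv
      · exact hdvT
    have hTeq : (({a0, a1, a2, a3} : Finset (Fin 6))ᶜ) = {v, d v} :=
      (Finset.eq_of_subset_of_card_le hsub (by
        rw [hTcard, Finset.card_pair (Ne.symm (hdne v))])).symm
    have : s v ∈ ({v, d v} : Finset (Fin 6)) := hTeq ▸ hsvT
    simp only [Finset.mem_insert, Finset.mem_singleton] at this
    rcases this with h' | h'
    · exact hsne v h'
    · exact hds v h'.symm
  have n54 : a5 ≠ a4 := by rw [ha5]; exact hdne a4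
  have n53 : a5 ≠ a3 := by
    intro h
    exact n42 ((eda5.symm.trans (by rw [h])).trans eda3 : a4 = a2)
  have n52 : a5 ≠ a2 := by
    intro h
    exact n43 ((eda5.symm.trans (by rw [h])).trans ha3.symm : a4 = a3)
  have n51 : a5 ≠ a1 := by
    intro h
    exact n40 ((eda5.symm.trans (by rw [h])).trans eda1 : a4 = a0)
  have n50 : a5 ≠ a0 := by
    intro h
    exact n41 ((eda5.symm.trans (by rw [h])).trans ha1.symm : a4 = a1)
  -- the six indices exhaust Fin 6
  have hcard6 : ({a0, a1, a2, a3, a4, a5} : Finset (Fin 6)).card = 6 := by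
    rw [Finset.card_insert_of_notMem (by
      simp only [Finset.mem_insert, Finset.mem_singleton]
      push_neg
      exact ⟨Ne.symm n10, Ne.symm n20, Ne.symm n30, Ne.symm n40, Ne.symm n50⟩),
      Finset.card_insert_of_notMem (by
      simp only [Finset.mem_insert, Finset.mem_singleton]
      push_neg
      exact ⟨Ne.symm n21, Ne.symm n31, Ne.symm n41, Ne.symm n51⟩),
      Finset.card_insert_of_notMem (by
      simp only [Finset.mem_insert, Finset.mem_singleton]
      push_neg
      exact ⟨Ne.symm n32, Ne.symm n42, Ne.symm n52⟩),
      Finset.card_insert_of_notMem (by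
      simp only [Finset.mem_insert, Finset.mem_singleton]
      push_neg
      exact ⟨Ne.symm n43, Ne.symm n53⟩),
      Finset.card_insert_of_notMem (by
      simp only [Finset.mem_singleton]
      exact Ne.symm n54), Finset.card_singleton]
  have huniv6 : ({a0, a1, a2, a3, a4, a5} : Finset (Fin 6)) = Finset.univ :=
    Finset.eq_univ_of_card _ (by rw [hcard6]; rfl)
  have hcases : ∀ i : Fin 6, i = a0 ∨ i = a1 ∨ i = a2 ∨ i = a3 ∨ i = a4 ∨ i = a5 := by
    intro i
    have : i ∈ ({a0, a1, a2, a3, a4, a5} : Finset (Fin 6)) := by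
      rw [huniv6]; exact Finset.mem_univ i
    simpa only [Finset.mem_insert, Finset.mem_singleton] using this
  -- closing the cycle
  have esa5 : s a5 = a0 := by
    rcases hcases (s a5) with h | h | h | h | h | h
    · exact h
    · exact absurd (((hsinv a5).symm.trans (congrArg s h)).trans ha2.symm : a5 = a2) n52
    · exact absurd (((hsinv a5).symm.trans (congrArg s h)).trans esa2 : a5 = a1) n51
    · exact absurd (((hsinv a5).symm.trans (congrArg s h)).trans ha4.symm : a5 = a4) n54
    · exact absurd (((hsinv a5).symm.trans (congrArg s h)).trans esa4 : a5 = a3) n53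
    · exact absurd h (hsne a5)
  have esa0 : s a0 = a5 := by rw [← esa5, hsinv]
  -- extract the nine points
  have h01 : (P a0 ∩ P a1).card = 2 := by rw [ha1]; exact hd2 a0
  have h12 : (P a1 ∩ P a2).card = 1 := by rw [ha2]; exact hs1 a1
  have h23 : (P a2 ∩ P a3).card = 2 := by rw [ha3]; exact hd2 a2
  have h34 : (P a3 ∩ P a4).card = 1 := by rw [ha4]; exact hs1 a3
  have h45 : (P a4 ∩ P a5).card = 2 := by rw [ha5]; exact hd2 a4
  have h50 : (P a5 ∩ P a0).card = 1 := by rw [← esa5]; exact hs1 a5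
  obtain ⟨x0, hI50⟩ := Finset.card_eq_one.mp h50
  obtain ⟨x1, x2, hx12, hI01⟩ := Finset.card_eq_two.mp h01
  obtain ⟨x3, hI12⟩ := Finset.card_eq_one.mp h12
  obtain ⟨x4, x5, hx45, hI23⟩ := Finset.card_eq_two.mp h23
  obtain ⟨x6, hI34⟩ := Finset.card_eq_one.mp h34
  obtain ⟨x7, x8, hx78, hI45⟩ := Finset.card_eq_two.mp h45
  -- every point of Fin 9 is one of the xᵢ
  have hxall : ∀ q : Fin 9,
      q ∈ ({x0, x1, x2, x3, x4, x5, x6, x7, x8} : Finset (Fin 9)) := by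
    intro q
    have hnon : (Finset.univ.filter fun i => q ∈ P i).Nonempty := by
      rw [← Finset.card_pos, hpt q]; omega
    obtain ⟨i, hi⟩ := hnon
    have hqi : q ∈ P i := (Finset.mem_filter.mp hi).2
    rcases hcases i with rfl | rfl | rfl | rfl | rfl | rfl
    · rcases hcover a0 q hqi with h | h
      · rw [← ha1] at h
        have hm : q ∈ P a0 ∩ P a1 := Finset.mem_inter.mpr ⟨hqi, h⟩
        rw [hI01] at hm
        simp only [Finset.mem_insert, Finset.mem_singleton] at hm
        rcases hm with rfl | rfl <;> simp
      · rw [esa0] at h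
        have hm : q ∈ P a5 ∩ P a0 := Finset.mem_inter.mpr ⟨h, hqi⟩
        rw [hI50, Finset.mem_singleton] at hm
        subst hm
        simp
    · rcases hcover a1 q hqi with h | h
      · rw [eda1] at h
        have hm : q ∈ P a0 ∩ P a1 := Finset.mem_inter.mpr ⟨h, hqi⟩
        rw [hI01] at hm
        simp only [Finset.mem_insert, Finset.mem_singleton] at hm
        rcases hm with rfl | rfl <;> simp
      · rw [← ha2] at h
        have hm : q ∈ P a1 ∩ P a2 := Finset.mem_inter.mpr ⟨hqi, h⟩
        rw [hI12] at hm
        rw [Finset.mem_singleton] at hm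
        subst hm
        simp
    · rcases hcover a2 q hqi with h | h
      · rw [← ha3] at h
        have hm : q ∈ P a2 ∩ P a3 := Finset.mem_inter.mpr ⟨hqi, h⟩
        rw [hI23] at hm
        simp only [Finset.mem_insert, Finset.mem_singleton] at hm
        rcases hm with rfl | rfl <;> simp
      · rw [esa2] at h
        have hm : q ∈ P a1 ∩ P a2 := Finset.mem_inter.mpr ⟨h, hqi⟩
        rw [hI12] at hm
        rw [Finset.mem_singleton] at hm
        subst hm
        simp
    · rcases hcover a3 q hqi with h | h
      · rw [eda3] at h
        have hm : q ∈ P a2 ∩ P a3 := Finset.mem_inter.mpr ⟨h, hqi⟩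
        rw [hI23] at hm
        simp only [Finset.mem_insert, Finset.mem_singleton] at hm
        rcases hm with rfl | rfl <;> simp
      · rw [← ha4] at h
        have hm : q ∈ P a3 ∩ P a4 := Finset.mem_inter.mpr ⟨hqi, h⟩
        rw [hI34] at hm
        rw [Finset.mem_singleton] at hm
        subst hm
        simp
    · rcases hcover a4 q hqi with h | h
      · rw [← ha5] at h
        have hm : q ∈ P a4 ∩ P a5 := Finset.mem_inter.mpr ⟨hqi, h⟩
        rw [hI45] at hm
        simp only [Finset.mem_insert, Finset.mem_singleton] at hm
        rcases hm with rfl | rfl <;> simp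
      · rw [esa4] at h
        have hm : q ∈ P a3 ∩ P a4 := Finset.mem_inter.mpr ⟨h, hqi⟩
        rw [hI34] at hm
        rw [Finset.mem_singleton] at hm
        subst hm
        simp
    · rcases hcover a5 q hqi with h | h
      · rw [eda5] at h
        have hm : q ∈ P a4 ∩ P a5 := Finset.mem_inter.mpr ⟨h, hqi⟩
        rw [hI45] at hm
        simp only [Finset.mem_insert, Finset.mem_singleton] at hm
        rcases hm with rfl | rfl <;> simp
      · rw [esa5] at h
        have hm : q ∈ P a5 ∩ P a0 := Finset.mem_inter.mpr ⟨hqi, h⟩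
        rw [hI50] at hm
        rw [Finset.mem_singleton] at hm
        subst hm
        simp
  -- the permutations
  set f : Fin 6 → Fin 6 := ![a0, a1, a2, a3, a4, a5] with hfdef
  have hf0 : f 0 = a0 := rfl
  have hf1 : f 1 = a1 := rfl
  have hf2 : f 2 = a2 := rfl
  have hf3 : f 3 = a3 := rfl
  have hf4 : f 4 = a4 := rfl
  have hf5 : f 5 = a5 := rfl
  have hfimg : Finset.univ.image f = Finset.univ := by
    apply Finset.eq_univ_of_forall
    intro y
    simp only [Finset.mem_image]
    rcases hcases y with rfl | rfl | rfl | rfl | rfl | rfl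
    exacts [⟨0, Finset.mem_univ _, hf0⟩, ⟨1, Finset.mem_univ _, hf1⟩,
      ⟨2, Finset.mem_univ _, hf2⟩, ⟨3, Finset.mem_univ _, hf3⟩,
      ⟨4, Finset.mem_univ _, hf4⟩, ⟨5, Finset.mem_univ _, hf5⟩]
  have hfinj : Function.Injective f := by
    rw [← Set.injOn_univ, ← Finset.coe_univ]
    apply Finset.injOn_of_card_image_eq
    rw [hfimg]
  set g : Fin 9 → Fin 9 := ![x0, x1, x2, x3, x4, x5, x6, x7, x8] with hgdef
  have hg0 : g 0 = x0 := rfl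
  have hg1 : g 1 = x1 := rfl
  have hg2 : g 2 = x2 := rfl
  have hg3 : g 3 = x3 := rfl
  have hg4 : g 4 = x4 := rfl
  have hg5 : g 5 = x5 := rfl
  have hg6 : g 6 = x6 := rfl
  have hg7 : g 7 = x7 := rfl
  have hg8 : g 8 = x8 := rfl
  have hgimg : Finset.univ.image g = Finset.univ := by
    apply Finset.eq_univ_of_forall
    intro y
    have hy := hxall y
    simp only [Finset.mem_insert, Finset.mem_singleton] at hy
    simp only [Finset.mem_image]
    rcases hy with rfl | rfl | rfl | rfl | rfl | rfl | rfl | rfl | rfl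
    exacts [⟨0, Finset.mem_univ _, hg0⟩, ⟨1, Finset.mem_univ _, hg1⟩,
      ⟨2, Finset.mem_univ _, hg2⟩, ⟨3, Finset.mem_univ _, hg3⟩,
      ⟨4, Finset.mem_univ _, hg4⟩, ⟨5, Finset.mem_univ _, hg5⟩,
      ⟨6, Finset.mem_univ _, hg6⟩, ⟨7, Finset.mem_univ _, hg7⟩,
      ⟨8, Finset.mem_univ _, hg8⟩]
  have hginj : Function.Injective g := by
    rw [← Set.injOn_univ, ← Finset.coe_univ]
    apply Finset.injOn_of_card_image_eq
    rw [hgimg]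
  refine ⟨Equiv.ofBijective f (Finite.injective_iff_bijective.mp hfinj),
    Equiv.ofBijective g (Finite.injective_iff_bijective.mp hginj), ?_⟩
  intro i
  fin_cases i
  · show P (f 0) = (cyclePattern 0).image g
    rw [hf0, show cyclePattern 0 = ({0, 1, 2} : Finset (Fin 9)) from rfl]
    rw [Finset.image_insert, Finset.image_insert, Finset.image_singleton, hg0, hg1, hg2]
    rw [hunion a0, ← ha1, esa0, hI01, Finset.inter_comm (P a0) (P a5), hI50,
      Finset.union_comm, ← Finset.insert_eq]
  · show P (f 1) = (cyclePattern 1).image g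
    rw [hf1, show cyclePattern 1 = ({1, 2, 3} : Finset (Fin 9)) from rfl]
    rw [Finset.image_insert, Finset.image_insert, Finset.image_singleton, hg1, hg2, hg3]
    rw [hunion a1, eda1, ← ha2, Finset.inter_comm (P a1) (P a0), hI01, hI12,
      Finset.insert_union, ← Finset.insert_eq]
  · show P (f 2) = (cyclePattern 2).image g
    rw [hf2, show cyclePattern 2 = ({3, 4, 5} : Finset (Fin 9)) from rfl]
    rw [Finset.image_insert, Finset.image_insert, Finset.image_singleton, hg3, hg4, hg5]
    rw [hunion a2, ← ha3, esa2, hI23, Finset.inter_comm (P a2) (P a1), hI12,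
      Finset.union_comm, ← Finset.insert_eq]
  · show P (f 3) = (cyclePattern 3).image g
    rw [hf3, show cyclePattern 3 = ({4, 5, 6} : Finset (Fin 9)) from rfl]
    rw [Finset.image_insert, Finset.image_insert, Finset.image_singleton, hg4, hg5, hg6]
    rw [hunion a3, eda3, ← ha4, Finset.inter_comm (P a3) (P a2), hI23, hI34,
      Finset.insert_union, ← Finset.insert_eq]
  · show P (f 4) = (cyclePattern 4).image g
    rw [hf4, show cyclePattern 4 = ({6, 7, 8} : Finset (Fin 9)) from rfl]
    rw [Finset.image_insert, Finset.image_insert, Finset.image_singleton, hg6, hg7, hg8]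
    rw [hunion a4, ← ha5, esa4, hI45, Finset.inter_comm (P a4) (P a3), hI34,
      Finset.union_comm, ← Finset.insert_eq]
  · show P (f 5) = (cyclePattern 5).image g
    rw [hf5, show cyclePattern 5 = ({7, 8, 0} : Finset (Fin 9)) from rfl]
    rw [Finset.image_insert, Finset.image_insert, Finset.image_singleton, hg7, hg8, hg0]
    rw [hunion a5, eda5, esa5, Finset.inter_comm (P a5) (P a4), hI45, hI50,
      Finset.insert_union, ← Finset.insert_eq]
end

section
/- Let $P_1,\dots,P_d$ be $d\ge 5$ distinct 4-element subsets of a $2d$-element set $\{q_1,\dots,q_{2d}\}$ such that every $q_j$ lies in exactly two of the $P_i$. Suppose further that some two distinct indices $i,j$ satisfy $|P_i\cap P_j|\in\{1,3\}$, i.e. some pair has intersection of odd cardinality. Then there exist indices $i\neq l$ with $|P_i\cap P_l|=1$. -/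
/-- Dichotomy (a)/(b) from Lemma (x): let `P₁, …, P_d` (`d ≥ 5`) be distinct 4-element
subsets of a `2d`-element set with every element lying in exactly two of the sets. If
configuration (b) fails, i.e. some pair of the sets has intersection of odd cardinality
(`1` or `3`), then some pair of the sets meets in exactly one point. -/
theorem stmt_15 (d : ℕ) (hd : 5 ≤ d)
    (P : Fin d → Finset (Fin (2 * d)))
    (hdist : Function.Injective P)
    (hcard : ∀ i, (P i).card = 4)
    (hpt : ∀ q : Fin (2 * d), (Finset.univ.filter (fun i => q ∈ P i)).card = 2)
    (hodd : ∃ i j, i ≠ j ∧ ((P i ∩ P j).card = 1 ∨ (P i ∩ P j).card = 3)) :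
    ∃ i l, i ≠ l ∧ (P i ∩ P l).card = 1 := by
  obtain ⟨i, j, hij, h1 | h3⟩ := hodd
  · exact ⟨i, j, hij, h1⟩
  · have hsd : (P i \ P j).card = 1 := by
      have := Finset.card_sdiff_add_card_inter (P i) (P j)
      rw [h3, hcard i] at this
      omega
    obtain ⟨q, hq⟩ := Finset.card_eq_one.mp hsd
    have hqi : q ∈ P i := by
      have : q ∈ P i \ P j := hq ▸ Finset.mem_singleton_self q
      exact (Finset.mem_sdiff.mp this).1
    have hqj : q ∉ P j := by
      have : q ∈ P i \ P j := hq ▸ Finset.mem_singleton_self q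
      exact (Finset.mem_sdiff.mp this).2
    have hi : i ∈ Finset.univ.filter (fun l => q ∈ P l) := by
      simp [hqi]
    have h2 : 1 < (Finset.univ.filter (fun l => q ∈ P l)).card := by
      rw [hpt q]; norm_num
    obtain ⟨k, hk, hki⟩ := Finset.exists_mem_ne h2 i
    have hqk : q ∈ P k := (Finset.mem_filter.mp hk).2
    have hkj : k ≠ j := fun h => hqj (h ▸ hqk)
    refine ⟨i, k, fun h => hki h.symm, ?_⟩
    have heq : P i ∩ P k = {q} := by
      apply Finset.eq_singleton_iff_unique_mem.mpr
      refine ⟨Finset.mem_inter.mpr ⟨hqi, hqk⟩, fun x hx => ?_⟩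
      obtain ⟨hxi, hxk⟩ := Finset.mem_inter.mp hx
      by_contra hxq
      have hxj : x ∈ P j := by
        by_contra hxj
        exact hxq (by simpa [hq] using Finset.mem_sdiff.mpr ⟨hxi, hxj⟩)
      have hsub : ({i, j, k} : Finset (Fin d)) ⊆
          Finset.univ.filter (fun l => x ∈ P l) := by
        intro l hl
        simp only [Finset.mem_insert, Finset.mem_singleton] at hl
        rcases hl with rfl | rfl | rfl <;> simp [hxi, hxj, hxk]
      have hc3 : ({i, j, k} : Finset (Fin d)).card = 3 := by
        rw [Finset.card_insert_of_notMem (by simp [hij, hki.symm]),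
          Finset.card_insert_of_notMem (by simp [hkj.symm]), Finset.card_singleton]
      have := Finset.card_le_card hsub
      rw [hc3, hpt x] at this
      omega
    rw [heq, Finset.card_singleton]
end

section
/- Let $P_1,\dots,P_d$ (with $d\ge 7$) be $d$ distinct 4-element subsets of a set $Q=\{q_1,\dots,q_d\}$ of $d$ points such that each $q_j$ lies in exactly four of the sets $P_i$. Then there exist two distinct points $x,y\in Q$ such that the number $\alpha$ of indices $i$ with $\{x,y\}\cap P_i\neq\emptyset$ satisfies $6\le\alpha\le d-1$. -/
open Finset

variable {d : ℕ} (P : Fin d → Finset (Fin d))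

def lam (x y : Fin d) : ℕ := (Finset.univ.filter (fun i => x ∈ P i ∧ y ∈ P i)).card

lemma lam_comm (x y : Fin d) : lam P x y = lam P y x := by
  unfold lam; congr 1; apply Finset.filter_congr; intro i _; simp [and_comm]

lemma lam_le (hpt : ∀ q : Fin d, (Finset.univ.filter (fun i => q ∈ P i)).card = 4)
    (x y : Fin d) : lam P x y ≤ 4 := by
  calc lam P x y ≤ (Finset.univ.filter (fun i => x ∈ P i)).card := by
        apply Finset.card_le_card; intro i hi
        simp only [mem_filter] at hi ⊢; exact ⟨hi.1, hi.2.1⟩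
    _ = 4 := hpt x

lemma lam_pos {x y : Fin d} {i : Fin d} (hx : x ∈ P i) (hy : y ∈ P i) :
    1 ≤ lam P x y := by
  apply Finset.card_pos.mpr
  exact ⟨i, by simp [hx, hy]⟩

lemma card_or (hpt : ∀ q : Fin d, (Finset.univ.filter (fun i => q ∈ P i)).card = 4)
    (x y : Fin d) :
    (Finset.univ.filter (fun i => x ∈ P i ∨ y ∈ P i)).card + lam P x y = 8 := by
  unfold lam
  rw [Finset.filter_or, Finset.filter_and, Finset.card_union_add_card_inter,
    hpt x, hpt y]

lemma sum_lam (hcard : ∀ i, (P i).card = 4)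
    (hpt : ∀ q : Fin d, (Finset.univ.filter (fun i => q ∈ P i)).card = 4)
    (x : Fin d) : ∑ y ∈ Finset.univ.erase x, lam P x y = 12 := by
  unfold lam
  simp only [Finset.card_filter]
  rw [Finset.sum_comm]
  have : ∀ i : Fin d, (∑ y ∈ Finset.univ.erase x, if x ∈ P i ∧ y ∈ P i then 1 else 0)
      = if x ∈ P i then 3 else 0 := by
    intro i
    by_cases hx : x ∈ P i
    · simp only [hx, true_and, if_true]
      have : (∑ y ∈ Finset.univ.erase x, if y ∈ P i then 1 else 0)
          = ((Finset.univ.erase x).filter (fun y => y ∈ P i)).card := by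
        rw [Finset.card_filter]
      rw [this]
      have : (Finset.univ.erase x).filter (fun y => y ∈ P i) = (P i).erase x := by
        ext y; simp [and_comm]
      rw [this, Finset.card_erase_of_mem hx, hcard i]
    · simp [hx]
  rw [Finset.sum_congr rfl (fun i _ => this i)]
  rw [← Finset.sum_filter, Finset.sum_const, hpt x]; rfl


lemma count2 {α : Type*} [DecidableEq α] (s : Finset α) (f : α → ℕ) (a b : ℕ)
    (h : ∀ y ∈ s, f y = a ∨ f y = b) (hab : a ≠ b) :
    (∑ y ∈ s, f y = a * (s.filter fun y => f y = a).card
      + b * (s.filter fun y => f y = b).card)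
    ∧ (s.filter fun y => f y = a).card + (s.filter fun y => f y = b).card = s.card := by
  have hnot : s.filter (fun y => ¬ f y = a) = s.filter (fun y => f y = b) := by
    ext y; simp only [mem_filter]
    constructor
    · rintro ⟨hy, hna⟩; exact ⟨hy, (h y hy).resolve_left hna⟩
    · rintro ⟨hy, hb⟩; exact ⟨hy, by rw [hb]; exact fun e => hab e.symm⟩
  constructor
  · rw [← Finset.sum_filter_add_sum_filter_not s (fun y => f y = a), hnot]
    congr 1
    · rw [Finset.sum_congr rfl (fun y hy => (mem_filter.mp hy).2), Finset.sum_const,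
        smul_eq_mul, Nat.mul_comm]
    · rw [Finset.sum_congr rfl (fun y hy => (mem_filter.mp hy).2), Finset.sum_const,
        smul_eq_mul, Nat.mul_comm]
  · rw [← hnot]; exact Finset.card_filter_add_card_filter_not _

lemma count3 {α : Type*} [DecidableEq α] (s : Finset α) (f : α → ℕ) (a b c : ℕ)
    (h : ∀ y ∈ s, f y = a ∨ f y = b ∨ f y = c) (hab : a ≠ b) (hac : a ≠ c) (hbc : b ≠ c) :
    (∑ y ∈ s, f y = a * (s.filter fun y => f y = a).card
      + b * (s.filter fun y => f y = b).card
      + c * (s.filter fun y => f y = c).card)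
    ∧ (s.filter fun y => f y = a).card + (s.filter fun y => f y = b).card
      + (s.filter fun y => f y = c).card = s.card := by
  set t := s.filter (fun y => ¬ f y = a) with ht
  have htb : t.filter (fun y => f y = b) = s.filter (fun y => f y = b) := by
    ext y; simp only [ht, mem_filter, filter_filter]
    constructor
    · rintro ⟨hy, _, hb⟩; exact ⟨hy, hb⟩
    · rintro ⟨hy, hb⟩; exact ⟨hy, by rw [hb]; exact fun e => hab e.symm, hb⟩
  have htc : t.filter (fun y => f y = c) = s.filter (fun y => f y = c) := by
    ext y; simp only [ht, mem_filter, filter_filter]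
    constructor
    · rintro ⟨hy, _, hb⟩; exact ⟨hy, hb⟩
    · rintro ⟨hy, hb⟩; exact ⟨hy, by rw [hb]; exact fun e => hac e.symm, hb⟩
  have h2 := count2 t f b c (fun y hy => by
    have := mem_filter.mp hy
    exact (h y this.1).resolve_left this.2) hbc
  rw [htb, htc] at h2
  constructor
  · rw [← Finset.sum_filter_add_sum_filter_not s (fun y => f y = a), ← ht, h2.1,
      Finset.sum_congr rfl (fun y hy => (mem_filter.mp hy).2), Finset.sum_const,
      smul_eq_mul, Nat.mul_comm, Nat.add_assoc]
  · have := Finset.card_filter_add_card_filter_not (s := s) (p := fun y => f y = a)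
    rw [← ht] at this
    omega

namespace Stmt16Aux

set_option maxHeartbeats 2000000 in
lemma d7_contra (P : Fin 7 → Finset (Fin 7))
    (hdist : Function.Injective P)
    (hcard : ∀ i, (P i).card = 4)
    (hpt : ∀ q : Fin 7, (Finset.univ.filter (fun i => q ∈ P i)).card = 4)
    (h2 : ∀ x y : Fin 7, x ≠ y → lam P x y ≠ 2) : False := by
  -- every pair has lam ≥ 1
  have h1 : ∀ x y : Fin 7, 1 ≤ lam P x y := by
    intro x y
    have hco := card_or P hpt x y
    have hle : (Finset.univ.filter (fun i => x ∈ P i ∨ y ∈ P i)).card ≤ 7 := by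
      have := Finset.card_le_univ (Finset.univ.filter (fun i => x ∈ P i ∨ y ∈ P i))
      simpa using this
    omega
  have hle4 : ∀ x y : Fin 7, lam P x y ≤ 4 := lam_le P hpt
  -- A x = A y when lam = 4
  have hAeq : ∀ x y : Fin 7, lam P x y = 4 →
      Finset.univ.filter (fun i => x ∈ P i) = Finset.univ.filter (fun i => y ∈ P i) := by
    intro x y h4
    have hx : Finset.univ.filter (fun i => x ∈ P i ∧ y ∈ P i)
        = Finset.univ.filter (fun i => x ∈ P i) := by
      apply Finset.eq_of_subset_of_card_le
      · intro i hi; simp only [mem_filter] at hi ⊢; exact ⟨hi.1, hi.2.1⟩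
      · rw [hpt x]; exact le_of_eq h4.symm
    have hy : Finset.univ.filter (fun i => x ∈ P i ∧ y ∈ P i)
        = Finset.univ.filter (fun i => y ∈ P i) := by
      apply Finset.eq_of_subset_of_card_le
      · intro i hi; simp only [mem_filter] at hi ⊢; exact ⟨hi.1, hi.2.2⟩
      · rw [hpt y]; exact le_of_eq h4.symm
    rw [← hx, hy]
  -- no lam = 4
  have hno4 : ∀ x y : Fin 7, x ≠ y → lam P x y ≠ 4 := by
    intro x y hxy h4
    -- find a third point z with lam x z = 4
    have hysub : y ∈ Finset.univ.erase x := Finset.mem_erase.mpr ⟨Ne.symm hxy, Finset.mem_univ y⟩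
    have hsum := sum_lam P hcard hpt x
    set s' := (Finset.univ.erase x).erase y with hs'
    have hsum' : ∑ z ∈ s', lam P x z = 8 := by
      have := Finset.add_sum_erase _ (lam P x) hysub
      rw [← hs'] at this
      omega
    have hcards' : s'.card = 5 := by
      rw [hs', Finset.card_erase_of_mem hysub, Finset.card_erase_of_mem (Finset.mem_univ x)]
      simp
    have hclass : ∀ z ∈ s', lam P x z = 4 ∨ lam P x z = 3 ∨ lam P x z = 1 := by
      intro z hz
      have hzx : z ≠ x := by
        rw [hs'] at hz
        exact Finset.ne_of_mem_erase (Finset.mem_of_mem_erase hz)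
      have := h1 x z
      have := hle4 x z
      have := h2 x z (Ne.symm hzx)
      omega
    obtain ⟨hsum3, hcard3⟩ := count3 s' (lam P x) 4 3 1 hclass (by omega) (by omega) (by omega)
    have hc4 : (s'.filter fun z => lam P x z = 4).card = 1 := by omega
    obtain ⟨z, hz⟩ := Finset.card_eq_one.mp hc4
    have hzmem : z ∈ s' ∧ lam P x z = 4 := by
      have : z ∈ s'.filter fun z => lam P x z = 4 := by rw [hz]; exact Finset.mem_singleton_self z
      exact Finset.mem_filter.mp this
    have hzx : z ≠ x := by
      exact Finset.ne_of_mem_erase (Finset.mem_of_mem_erase hzmem.1)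
    have hzy : z ≠ y := Finset.ne_of_mem_erase hzmem.1
    -- A x = A y = A z
    have hxy4 := hAeq x y h4
    have hxz4 := hAeq x z hzmem.2
    -- indices outside A x
    have hBcard : (Finset.univ.filter (fun i => x ∉ P i)).card = 3 := by
      have := Finset.card_filter_add_card_filter_not
        (s := (Finset.univ : Finset (Fin 7))) (p := fun i => x ∈ P i)
      rw [hpt x] at this
      simp only [Finset.card_univ, Fintype.card_fin] at this
      omega
    have hPj : ∀ j ∈ Finset.univ.filter (fun i => x ∉ P i),
        P j = Finset.univ \ {x, y, z} := by
      intro j hj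
      have hxj : x ∉ P j := (Finset.mem_filter.mp hj).2
      have hyj : y ∉ P j := by
        intro hmem
        have : j ∈ Finset.univ.filter (fun i => y ∈ P i) := by simp [hmem]
        rw [← hxy4] at this
        exact hxj (Finset.mem_filter.mp this).2
      have hzj : z ∉ P j := by
        intro hmem
        have : j ∈ Finset.univ.filter (fun i => z ∈ P i) := by simp [hmem]
        rw [← hxz4] at this
        exact hxj (Finset.mem_filter.mp this).2
      apply Finset.eq_of_subset_of_card_le
      · intro w hw
        simp only [Finset.mem_sdiff, Finset.mem_univ, Finset.mem_insert,
          Finset.mem_singleton, true_and]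
        push_neg
        refine ⟨?_, ?_, ?_⟩
        · rintro rfl; exact hxj hw
        · rintro rfl; exact hyj hw
        · rintro rfl; exact hzj hw
      · rw [Finset.card_sdiff_of_subset (by intro w hw; exact Finset.mem_univ w)]
        have : ({x, y, z} : Finset (Fin 7)).card = 3 := by
          rw [Finset.card_eq_three]
          exact ⟨x, y, z, hxy, Ne.symm hzx, Ne.symm hzy, rfl⟩
        rw [this, hcard j]
        simp
    have : 1 < (Finset.univ.filter (fun i => x ∉ P i)).card := by omega
    obtain ⟨j, hj, j', hj', hjj'⟩ := Finset.one_lt_card.mp this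
    exact hjj' (hdist ((hPj j hj).trans (hPj j' hj').symm))
  -- now every pair has lam ∈ {1, 3}; count 3-neighbors
  have hN : ∀ x : Fin 7, (Finset.univ.filter (fun y => x ≠ y ∧ lam P x y = 3)).card = 3 := by
    intro x
    have hclass : ∀ y ∈ Finset.univ.erase x, lam P x y = 3 ∨ lam P x y = 1 := by
      intro y hy
      have hyx : y ≠ x := Finset.ne_of_mem_erase hy
      have := h1 x y
      have := hle4 x y
      have := h2 x y (Ne.symm hyx)
      have := hno4 x y (Ne.symm hyx)
      omega
    obtain ⟨hsum3, hcard3⟩ := count2 (Finset.univ.erase x) (lam P x) 3 1 hclass (by omega)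
    rw [sum_lam P hcard hpt x] at hsum3
    have hce : (Finset.univ.erase x).card = 6 := by
      rw [Finset.card_erase_of_mem (Finset.mem_univ x)]; simp
    have heq : (Finset.univ.filter (fun y => x ≠ y ∧ lam P x y = 3))
        = ((Finset.univ.erase x).filter fun y => lam P x y = 3) := by
      ext y
      simp only [Finset.mem_filter, Finset.mem_erase, Finset.mem_univ, true_and]
      tauto
    rw [heq]
    omega
  -- parity contradiction
  set E := (Finset.univ : Finset (Fin 7 × Fin 7)).filter
    (fun p => p.1 ≠ p.2 ∧ lam P p.1 p.2 = 3) with hE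
  have hEcard : E.card = 21 := by
    rw [hE, Finset.card_filter, Fintype.sum_prod_type]
    have : ∀ x : Fin 7, (∑ y : Fin 7, if x ≠ y ∧ lam P x y = 3 then 1 else 0) = 3 := by
      intro x
      rw [← Finset.card_filter]
      exact hN x
    rw [Finset.sum_congr rfl (fun x _ => this x)]
    simp
  have hhalf : (E.filter fun p => p.1 < p.2).card = (E.filter fun p => ¬ p.1 < p.2).card := by
    apply Finset.card_bij (fun p _ => p.swap)
    · intro p hp
      simp only [Finset.mem_filter, hE, Finset.mem_univ, true_and] at hp ⊢
      obtain ⟨⟨hne, h3⟩, hlt⟩ := hp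
      exact ⟨⟨hne.symm, by rw [Prod.fst_swap, Prod.snd_swap, lam_comm]; exact h3⟩,
        by simp only [Prod.fst_swap, Prod.snd_swap]; exact fun h => absurd hlt (lt_asymm h).elim⟩
    · intro p hp q hq hpq
      exact Prod.swap_injective hpq
    · intro q hq
      refine ⟨q.swap, ?_, by simp⟩
      simp only [Finset.mem_filter, hE, Finset.mem_univ, true_and, Prod.fst_swap,
        Prod.snd_swap] at hq ⊢
      obtain ⟨⟨hne, h3⟩, hnlt⟩ := hq
      refine ⟨⟨hne.symm, by rw [lam_comm]; exact h3⟩, ?_⟩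
      rcases hne.lt_or_gt with h | h
      · exact absurd h hnlt
      · exact h
  have := Finset.card_filter_add_card_filter_not (s := E) (p := fun p => p.1 < p.2)
  omega

set_option maxHeartbeats 2000000 in
lemma d8_contra (P : Fin 8 → Finset (Fin 8))
    (hdist : Function.Injective P)
    (hcard : ∀ i, (P i).card = 4)
    (hpt : ∀ q : Fin 8, (Finset.univ.filter (fun i => q ∈ P i)).card = 4)
    (h2 : ∀ x y : Fin 8, x ≠ y → lam P x y ≠ 1 ∧ lam P x y ≠ 2) : False := by
  have hle4 : ∀ x y : Fin 8, lam P x y ≤ 4 := lam_le P hpt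
  have hAeq : ∀ x y : Fin 8, lam P x y = 4 →
      Finset.univ.filter (fun i => x ∈ P i) = Finset.univ.filter (fun i => y ∈ P i) := by
    intro x y h4
    have hx : Finset.univ.filter (fun i => x ∈ P i ∧ y ∈ P i)
        = Finset.univ.filter (fun i => x ∈ P i) := by
      apply Finset.eq_of_subset_of_card_le
      · intro i hi; simp only [mem_filter] at hi ⊢; exact ⟨hi.1, hi.2.1⟩
      · rw [hpt x]; exact le_of_eq h4.symm
    have hy : Finset.univ.filter (fun i => x ∈ P i ∧ y ∈ P i)
        = Finset.univ.filter (fun i => y ∈ P i) := by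
      apply Finset.eq_of_subset_of_card_le
      · intro i hi; simp only [mem_filter] at hi ⊢; exact ⟨hi.1, hi.2.2⟩
      · rw [hpt y]; exact le_of_eq h4.symm
    rw [← hx, hy]
  -- no lam = 4
  have hno4 : ∀ x y : Fin 8, x ≠ y → lam P x y ≠ 4 := by
    intro x y hxy h4
    have hysub : y ∈ Finset.univ.erase x := Finset.mem_erase.mpr ⟨Ne.symm hxy, Finset.mem_univ y⟩
    have hsum := sum_lam P hcard hpt x
    set s' := (Finset.univ.erase x).erase y with hs'
    have hsum' : ∑ z ∈ s', lam P x z = 8 := by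
      have := Finset.add_sum_erase _ (lam P x) hysub
      rw [← hs'] at this
      omega
    have hcards' : s'.card = 6 := by
      rw [hs', Finset.card_erase_of_mem hysub, Finset.card_erase_of_mem (Finset.mem_univ x)]
      simp
    have hclass : ∀ z ∈ s', lam P x z = 4 ∨ lam P x z = 3 ∨ lam P x z = 0 := by
      intro z hz
      have hzx : z ≠ x := Finset.ne_of_mem_erase (Finset.mem_of_mem_erase hz)
      have := hle4 x z
      have := h2 x z (Ne.symm hzx)
      omega
    obtain ⟨hsum3, hcard3⟩ := count3 s' (lam P x) 4 3 0 hclass (by omega) (by omega) (by omega)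
    have hc4 : 1 < (s'.filter fun z => lam P x z = 4).card := by omega
    obtain ⟨z, hz, w, hw, hzw⟩ := Finset.one_lt_card.mp hc4
    rw [Finset.mem_filter] at hz hw
    have hzx : z ≠ x := Finset.ne_of_mem_erase (Finset.mem_of_mem_erase hz.1)
    have hzy : z ≠ y := Finset.ne_of_mem_erase hz.1
    have hwx : w ≠ x := Finset.ne_of_mem_erase (Finset.mem_of_mem_erase hw.1)
    have hwy : w ≠ y := Finset.ne_of_mem_erase hw.1
    have hxy4 := hAeq x y h4
    have hxz4 := hAeq x z hz.2
    have hxw4 := hAeq x w hw.2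
    have hmem : ∀ q : Fin 8,
        Finset.univ.filter (fun i => x ∈ P i) = Finset.univ.filter (fun i => q ∈ P i) →
        ∀ i ∈ Finset.univ.filter (fun i => x ∈ P i), q ∈ P i := by
      intro q hq i hi
      rw [hq] at hi
      exact (Finset.mem_filter.mp hi).2
    have hPi : ∀ i ∈ Finset.univ.filter (fun i => x ∈ P i), P i = {x, y, z, w} := by
      intro i hi
      symm
      apply Finset.eq_of_subset_of_card_le
      · intro v hv
        simp only [Finset.mem_insert, Finset.mem_singleton] at hv
        rcases hv with rfl | rfl | rfl | rfl
        · exact (Finset.mem_filter.mp hi).2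
        · exact hmem _ hxy4 i hi
        · exact hmem _ hxz4 i hi
        · exact hmem _ hxw4 i hi
      · rw [hcard i]
        have : ({x, y, z, w} : Finset (Fin 8)).card = 4 := by
          rw [Finset.card_insert_of_notMem, Finset.card_insert_of_notMem,
            Finset.card_insert_of_notMem, Finset.card_singleton]
          · simp only [Finset.mem_singleton]; exact hzw
          · simp only [Finset.mem_insert, Finset.mem_singleton]; push_neg
            exact ⟨Ne.symm hzy, Ne.symm hwy⟩
          · simp only [Finset.mem_insert, Finset.mem_singleton]; push_neg
            exact ⟨hxy, Ne.symm hzx, Ne.symm hwx⟩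
        omega
    have hA4 : 1 < (Finset.univ.filter (fun i => x ∈ P i)).card := by rw [hpt x]; omega
    obtain ⟨i, hi, i', hi', hii'⟩ := Finset.one_lt_card.mp hA4
    exact hii' (hdist ((hPi i hi).trans (hPi i' hi').symm))
  -- all pairs have lam ∈ {0, 3}
  have hmem3 : ∀ x y : Fin 8, x ≠ y → ∀ i : Fin 8, x ∈ P i → y ∈ P i → lam P x y = 3 := by
    intro x y hxy i hx hy
    have := lam_pos P hx hy
    have := hle4 x y
    have := h2 x y hxy
    have := hno4 x y hxy
    omega
  -- neighborhoods
  have hNcard : ∀ x : Fin 8, (Finset.univ.filter (fun y => x ≠ y ∧ lam P x y = 3)).card = 4 := by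
    intro x
    have hclass : ∀ y ∈ Finset.univ.erase x, lam P x y = 3 ∨ lam P x y = 0 := by
      intro y hy
      have hyx : y ≠ x := Finset.ne_of_mem_erase hy
      have := hle4 x y
      have := h2 x y (Ne.symm hyx)
      have := hno4 x y (Ne.symm hyx)
      omega
    obtain ⟨hsum3, hcard3⟩ := count2 (Finset.univ.erase x) (lam P x) 3 0 hclass (by omega)
    rw [sum_lam P hcard hpt x] at hsum3
    have heq : (Finset.univ.filter (fun y => x ≠ y ∧ lam P x y = 3))
        = ((Finset.univ.erase x).filter fun y => lam P x y = 3) := by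
      ext y
      simp only [Finset.mem_filter, Finset.mem_erase, Finset.mem_univ, true_and]
      tauto
    rw [heq]
    omega
  -- the key structural step: common neighborhoods
  have hL8c : ∀ x : Fin 8, ∀ y ∈ Finset.univ.filter (fun y => x ≠ y ∧ lam P x y = 3),
      ∀ z ∈ Finset.univ.filter (fun y => x ≠ y ∧ lam P x y = 3), y ≠ z → lam P y z = 3 := by
    intro x y hy z hz hyz
    set N := Finset.univ.filter (fun y => x ≠ y ∧ lam P x y = 3) with hN
    set Ax := Finset.univ.filter (fun i => x ∈ P i) with hAx
    -- the map i ↦ (P i).erase x is a bijection from Ax onto 3-subsets of N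
    have himg : Ax.image (fun i => (P i).erase x) = Finset.powersetCard 3 N := by
      apply Finset.eq_of_subset_of_card_le
      · intro T hT
        obtain ⟨i, hi, rfl⟩ := Finset.mem_image.mp hT
        have hxi : x ∈ P i := (Finset.mem_filter.mp hi).2
        rw [Finset.mem_powersetCard]
        constructor
        · intro v hv
          have hvP : v ∈ P i := Finset.mem_of_mem_erase hv
          have hvx : v ≠ x := Finset.ne_of_mem_erase hv
          rw [hN, Finset.mem_filter]
          exact ⟨Finset.mem_univ v, Ne.symm hvx, hmem3 x v (Ne.symm hvx) i hxi hvP⟩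
        · rw [Finset.card_erase_of_mem hxi, hcard i]
      · rw [Finset.card_powersetCard, hNcard x]
        rw [Finset.card_image_of_injOn]
        · rw [hAx, hpt x]; decide
        · intro i hi i' hi' he
          dsimp only at he
          have hxi : x ∈ P i := (Finset.mem_filter.mp hi).2
          have hxi' : x ∈ P i' := (Finset.mem_filter.mp hi').2
          apply hdist
          rw [← Finset.insert_erase hxi, ← Finset.insert_erase hxi', he]
    -- find t ∈ N distinct from y, z
    have hyN := Finset.mem_filter.mp hy
    have hzN := Finset.mem_filter.mp hz
    have htex : (N \ {y, z}).Nonempty := by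
      apply Finset.card_pos.mp
      have h1 := Finset.le_card_sdiff ({y, z} : Finset (Fin 8)) N
      have h2' : ({y, z} : Finset (Fin 8)).card ≤ 2 := Finset.card_insert_le _ _ |>.trans (by simp)
      rw [hN] at *
      rw [hNcard x] at h1
      omega
    obtain ⟨t, ht⟩ := htex
    have htN : t ∈ N := (Finset.mem_sdiff.mp ht).1
    have hty : t ≠ y := by
      have := (Finset.mem_sdiff.mp ht).2
      simp only [Finset.mem_insert, Finset.mem_singleton] at this
      tauto
    have htz : t ≠ z := by
      have := (Finset.mem_sdiff.mp ht).2
      simp only [Finset.mem_insert, Finset.mem_singleton] at this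
      tauto
    have hTmem : N.erase t ∈ Finset.powersetCard 3 N := by
      rw [Finset.mem_powersetCard]
      refine ⟨Finset.erase_subset _ _, ?_⟩
      rw [Finset.card_erase_of_mem htN, hN, hNcard x]
    rw [← himg] at hTmem
    obtain ⟨i, hi, hie⟩ := Finset.mem_image.mp hTmem
    have hyi : y ∈ P i := by
      have : y ∈ N.erase t := Finset.mem_erase.mpr ⟨Ne.symm hty, hy⟩
      rw [← hie] at this
      exact Finset.mem_of_mem_erase this
    have hzi : z ∈ P i := by
      have : z ∈ N.erase t := Finset.mem_erase.mpr ⟨Ne.symm htz, hz⟩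
      rw [← hie] at this
      exact Finset.mem_of_mem_erase this
    exact hmem3 y z hyz i hyi hzi
  -- conclude: the closed neighborhood of x is closed, giving a contradiction
  obtain ⟨x⟩ : Nonempty (Fin 8) := ⟨0⟩
  set N := Finset.univ.filter (fun y => x ≠ y ∧ lam P x y = 3) with hN
  set M := insert x N with hM
  have hxN : x ∉ N := by rw [hN]; simp
  have hMcard : M.card = 5 := by
    rw [hM, Finset.card_insert_of_notMem hxN, hN, hNcard x]
  have hNy : ∀ y ∈ N, Finset.univ.filter (fun w => y ≠ w ∧ lam P y w = 3) = M.erase y := by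
    intro y hy
    have hyN := Finset.mem_filter.mp hy
    symm
    apply Finset.eq_of_subset_of_card_le
    · intro v hv
      have hvy : v ≠ y := Finset.ne_of_mem_erase hv
      have hvM : v ∈ M := Finset.mem_of_mem_erase hv
      rw [Finset.mem_filter]
      refine ⟨Finset.mem_univ v, Ne.symm hvy, ?_⟩
      rw [hM, Finset.mem_insert] at hvM
      rcases hvM with rfl | hvN
      · rw [lam_comm]; exact hyN.2.2
      · exact hL8c x y hy v hvN (Ne.symm hvy)
    · rw [Finset.card_erase_of_mem (by rw [hM]; exact Finset.mem_insert_of_mem hy), hMcard,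
        hNcard y]
  have hzex : (Finset.univ \ M).Nonempty := by
    apply Finset.card_pos.mp
    rw [Finset.card_sdiff_of_subset (Finset.subset_univ M), hMcard]
    simp
  obtain ⟨z, hzmem⟩ := hzex
  have hzM : z ∉ M := (Finset.mem_sdiff.mp hzmem).2
  have hzx : z ≠ x := by rintro rfl; exact hzM (by rw [hM]; exact Finset.mem_insert_self _ _)
  have hzN : z ∉ N := fun h => hzM (by rw [hM]; exact Finset.mem_insert_of_mem h)
  have hsub : Finset.univ.filter (fun w => z ≠ w ∧ lam P z w = 3)
      ⊆ Finset.univ \ insert z M := by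
    intro v hv
    rw [Finset.mem_filter] at hv
    obtain ⟨-, hzv, h3⟩ := hv
    rw [Finset.mem_sdiff]
    refine ⟨Finset.mem_univ v, ?_⟩
    rw [Finset.mem_insert, hM, Finset.mem_insert]
    push_neg
    refine ⟨Ne.symm hzv, ?_, ?_⟩
    · rintro rfl
      exact hzN (Finset.mem_filter.mpr ⟨Finset.mem_univ z,
        Ne.symm hzx, by rw [lam_comm]; exact h3⟩)
    · intro hvN
      have := hNy v hvN
      have hzin : z ∈ M.erase v := by
        rw [← this, Finset.mem_filter]
        exact ⟨Finset.mem_univ z, Ne.symm hzv, by rw [lam_comm]; exact h3⟩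
      exact hzM (Finset.mem_of_mem_erase hzin)
  have hle := Finset.card_le_card hsub
  rw [hNcard z, Finset.card_sdiff_of_subset (Finset.subset_univ _),
    Finset.card_insert_of_notMem hzM, hMcard] at hle
  simp at hle

end Stmt16Aux

/-- Claim from case (viii): let `P₁, …, P_d` (`d ≥ 7`) be distinct 4-element subsets of a
`d`-point set such that each point lies in exactly four of the sets. Then there exist two
distinct points `x, y` such that the number `α` of indices `i` with
`{x, y} ∩ P i ≠ ∅` satisfies `6 ≤ α ≤ d - 1`. -/
theorem stmt_16 (d : ℕ) (hd : 7 ≤ d)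
    (P : Fin d → Finset (Fin d))
    (hdist : Function.Injective P)
    (hcard : ∀ i, (P i).card = 4)
    (hpt : ∀ q : Fin d, (Finset.univ.filter (fun i => q ∈ P i)).card = 4) :
    ∃ x y : Fin d, x ≠ y ∧
      6 ≤ (Finset.univ.filter (fun i => x ∈ P i ∨ y ∈ P i)).card ∧
      (Finset.univ.filter (fun i => x ∈ P i ∨ y ∈ P i)).card ≤ d - 1 := by
  have key : ∃ x y : Fin d, x ≠ y ∧ 9 - d ≤ lam P x y ∧ lam P x y ≤ 2 := by
    rcases Nat.lt_or_ge d 9 with hlt | hge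
    · have hd' : d = 7 ∨ d = 8 := by omega
      rcases hd' with rfl | rfl
      · by_contra hcon
        push_neg at hcon
        apply Stmt16Aux.d7_contra P hdist hcard hpt
        intro x y hxy heq
        have := hcon x y hxy (by omega)
        omega
      · by_contra hcon
        push_neg at hcon
        apply Stmt16Aux.d8_contra P hdist hcard hpt
        intro x y hxy
        have h1 := hcon x y hxy
        constructor
        · intro heq; have := h1 (by omega); omega
        · intro heq; have := h1 (by omega); omega
    · by_contra hcon
      push_neg at hcon
      set x : Fin d := ⟨0, by omega⟩ with hx
      have hsum := sum_lam P hcard hpt x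
      have hbig : ∀ y ∈ Finset.univ.erase x, 3 ≤ lam P x y := by
        intro y hy
        have hyx := Finset.ne_of_mem_erase hy
        have := hcon x y (Ne.symm hyx) (by omega)
        omega
      have hsl := Finset.card_nsmul_le_sum _ _ 3 hbig
      rw [hsum, Finset.card_erase_of_mem (Finset.mem_univ x), Finset.card_univ,
        Fintype.card_fin, smul_eq_mul] at hsl
      omega
  obtain ⟨x, y, hxy, hge2, hle2⟩ := key
  have hco := card_or P hpt x y
  exact ⟨x, y, hxy, by omega, by omega⟩
end
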